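/- There is no vector v in Λ^* ∖ Λ with (v,v) ≤ 3 and (v, r) = 1, where Λ = (A_9⊕A_9⊕A_1) + ℤ(α_9, 2α_9, α_1), Λ^* = Λ + ℤ(2α_9, −α_9, 0), and r = (0,0,(1,−1)). -/
import Mathlib


noncomputable section

/-- The ambient space ℝ¹⁰ ⊕ ℝ¹⁰ ⊕ ℝ². -/
abbrev V : Type := (Fin 10 → ℝ) × (Fin 10 → ℝ) × (Fin 2 → ℝ)

/-- The standard inner product on ℝ¹⁰ ⊕ ℝ¹⁰ ⊕ ℝ². -/
def ip (x y : V) : ℝ :=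
  (∑ t, x.1 t * y.1 t) + (∑ t, x.2.1 t * y.2.1 t) + (∑ t, x.2.2 t * y.2.2 t)

/-- The root lattice A₉ ⊆ ℝ¹⁰. -/
def A9 : Set (Fin 10 → ℝ) := {x | (∀ i, ∃ z : ℤ, x i = (z : ℝ)) ∧ ∑ i, x i = 0}

/-- The root lattice A₁ ⊆ ℝ². -/
def A1 : Set (Fin 2 → ℝ) := {x | (∀ i, ∃ z : ℤ, x i = (z : ℝ)) ∧ ∑ i, x i = 0}

/-- The lattice L = A₉ ⊕ A₉ ⊕ A₁. -/
def Lset : Set V := {v | v.1 ∈ A9 ∧ v.2.1 ∈ A9 ∧ v.2.2 ∈ A1}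

/-- α₉ = (1/10, …, 1/10, −9/10). -/
def α9 : Fin 10 → ℝ := fun i => if (i : ℕ) = 9 then -(9 / 10) else 1 / 10

/-- α₁ = (1/2, −1/2). -/
def α1 : Fin 2 → ℝ := fun i => if (i : ℕ) = 1 then -(1 / 2) else 1 / 2

/-- α = (α₉, 2α₉, α₁). -/
def αvec : V := (α9, (2 : ℝ) • α9, α1)

/-- The overlattice Λ = L + ℤα. -/
def Λset : Set V := {v | ∃ m : ℤ, v - m • αvec ∈ Lset}

/-- The switching root r = (0, 0, 2α₁) = (0, 0, (1, −1)). -/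
def rvec : V := (0, 0, (2 : ℝ) • α1)


/-- β = (2α₉, −α₉, 0), so that Λ^* = Λ + ℤβ. -/
def βvec : V := ((2 : ℝ) • α9, -α9, 0)

lemma sq_int_bound (j : ℤ) (t : ℝ) : t^2 + (2*t - 1) * j ≤ ((j:ℝ) + t)^2 := by
  have h : (0:ℤ) ≤ j * (j+1) := by
    rcases le_or_gt 0 j with h|h
    · exact mul_nonneg h (by omega)
    · nlinarith
  have h' : (0:ℝ) ≤ (j:ℝ) * (j+1) := by exact_mod_cast h
  nlinarith

lemma A9_bound (z : Fin 10 → ℤ) (hz : ∑ i, z i = 0) (c : ℤ) :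
    ((c % 10 : ℤ) : ℝ) * (10 - ((c % 10 : ℤ) : ℝ)) / 10 ≤ ∑ i, ((z i : ℝ) + (c:ℝ) * α9 i)^2 := by
  set q := c / 10 with hq
  set r := c % 10 with hr
  have hc : c = 10*q + r := by rw [hq, hr]; omega
  have hcr : (c:ℝ) = 10*(q:ℝ) + (r:ℝ) := by exact_mod_cast hc
  set j : Fin 10 → ℤ := fun i => z i + q - (if (i:ℕ) = 9 then c else 0) with hj
  have hsumj : ∑ i, j i = -r := by
    simp only [hj]
    rw [Finset.sum_sub_distrib, Finset.sum_add_distrib, hz]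
    have h10 : ∑ i : Fin 10, (if (i:ℕ) = 9 then c else 0) = c := by
      simp [Fin.sum_univ_succ]
    rw [h10]
    simp
    omega
  have hx : ∀ i, (z i : ℝ) + (c:ℝ) * α9 i = (j i : ℝ) + (r:ℝ)/10 := by
    intro i
    by_cases h : (i:ℕ) = 9
    · simp only [α9, hj, h, if_pos]
      push_cast
      linarith [hcr]
    · simp only [α9, hj, h, if_neg, if_false]
      push_cast
      linarith [hcr]
  calc ((r:ℤ):ℝ) * (10 - ((r:ℤ):ℝ)) / 10
      = 10 * ((r:ℝ)/10)^2 + (2*((r:ℝ)/10) - 1) * ((-r : ℤ) : ℝ) := by push_cast; ring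
    _ = ∑ _i : Fin 10, (((r:ℝ)/10)^2) + (2*((r:ℝ)/10) - 1) * ((∑ i, j i : ℤ) : ℝ) := by
        rw [hsumj]; simp
    _ = ∑ i : Fin 10, (((r:ℝ)/10)^2 + (2*((r:ℝ)/10) - 1) * (j i : ℝ)) := by
        rw [Finset.sum_add_distrib]
        push_cast
        rw [Finset.mul_sum]
    _ ≤ ∑ i, ((j i : ℝ) + (r:ℝ)/10)^2 := Finset.sum_le_sum fun i _ => sq_int_bound (j i) _
    _ = ∑ i, ((z i : ℝ) + (c:ℝ) * α9 i)^2 :=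
        Finset.sum_congr rfl fun i _ => by rw [hx i]

lemma sumα9 : ∑ i, α9 i = 0 := by norm_num [α9, Fin.sum_univ_succ]

lemma sumα1 : ∑ i, α1 i = 0 := by norm_num [α1, Fin.sum_univ_two]

/-- There is no vector v ∈ Λ^* ∖ Λ with (v,v) ≤ 3 and (v,r) = 1, where
Λ = (A₉⊕A₉⊕A₁) + ℤ(α₉, 2α₉, α₁), Λ^* = Λ + ℤ(2α₉, −α₉, 0) and r = (0,0,(1,−1)). -/
theorem stmt19 :
    ¬ ∃ v : V, (∃ m : ℤ, v - m • βvec ∈ Λset) ∧ v ∉ Λset ∧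
      ip v v ≤ 3 ∧ ip v rvec = 1 := by
  rintro ⟨v, ⟨m, n, hL⟩, hvΛ, hnorm, hipr⟩
  obtain ⟨⟨hz1, hs1⟩, ⟨hz2, hs2⟩, hz3, hs3⟩ := hL
  choose z1 hz1 using hz1
  choose z2 hz2 using hz2
  choose z3 hz3 using hz3
  simp only [βvec, αvec, Prod.fst_sub, Prod.snd_sub, Prod.smul_fst, Prod.smul_snd,
    Pi.sub_apply, Pi.smul_apply, Pi.neg_apply, Pi.zero_apply, smul_eq_mul,
    sub_zero, mul_zero, smul_zero] at hz1 hs1 hz2 hs2 hz3 hs3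
  simp only [zsmul_eq_mul, smul_eq_mul, smul_neg] at hz1 hs1 hz2 hs2 hz3 hs3
  -- canonical component formulas
  have h1 : ∀ i, v.1 i = (z1 i : ℝ) + ((n + 2*m : ℤ) : ℝ) * α9 i := by
    intro i; have h := hz1 i; push_cast at h ⊢; linarith
  have h2 : ∀ i, v.2.1 i = (z2 i : ℝ) + ((2*n - m : ℤ) : ℝ) * α9 i := by
    intro i; have h := hz2 i; push_cast at h ⊢; linarith
  have h3 : ∀ i, v.2.2 i = (z3 i : ℝ) + (n : ℝ) * α1 i := by
    intro i; have h := hz3 i; push_cast at h ⊢; linarith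
  -- integer sums
  have hz1sum : ∑ i, z1 i = 0 := by
    have h : ∑ i, ((z1 i : ℝ)) = 0 := by
      rw [← hs1]; exact Finset.sum_congr rfl fun i _ => (hz1 i).symm
    exact_mod_cast h
  have hz2sum : ∑ i, z2 i = 0 := by
    have h : ∑ i, ((z2 i : ℝ)) = 0 := by
      rw [← hs2]; exact Finset.sum_congr rfl fun i _ => (hz2 i).symm
    exact_mod_cast h
  have hz3sum : z3 0 + z3 1 = 0 := by
    have h : ∑ i, ((z3 i : ℝ)) = 0 := by
      rw [← hs3]; exact Finset.sum_congr rfl fun i _ => (hz3 i).symm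
    have h' : ((z3 0 : ℝ)) + (z3 1 : ℝ) = 0 := by rwa [Fin.sum_univ_two] at h
    exact_mod_cast h'
  have hv1sum : ∑ i, v.1 i = 0 := by
    have e : ∑ i, v.1 i = ∑ i, ((z1 i:ℝ) + ((n+2*m:ℤ):ℝ) * α9 i) :=
      Finset.sum_congr rfl fun i _ => h1 i
    rw [e, Finset.sum_add_distrib, ← Finset.mul_sum, sumα9, mul_zero, add_zero]
    exact_mod_cast hz1sum
  have hv2sum : ∑ i, v.2.1 i = 0 := by
    have e : ∑ i, v.2.1 i = ∑ i, ((z2 i:ℝ) + ((2*n-m:ℤ):ℝ) * α9 i) :=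
      Finset.sum_congr rfl fun i _ => h2 i
    rw [e, Finset.sum_add_distrib, ← Finset.mul_sum, sumα9, mul_zero, add_zero]
    exact_mod_cast hz2sum
  have hv3sum : ∑ i, v.2.2 i = 0 := by
    have e : ∑ i, v.2.2 i = ∑ i, ((z3 i:ℝ) + (n:ℝ) * α1 i) :=
      Finset.sum_congr rfl fun i _ => h3 i
    rw [e, Finset.sum_add_distrib, ← Finset.mul_sum, sumα1, mul_zero, add_zero,
      Fin.sum_univ_two]
    exact_mod_cast hz3sum
  -- values of α1
  have hα10 : α1 0 = 1/2 := by norm_num [α1]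
  have hα11 : α1 1 = -(1/2) := by norm_num [α1]
  -- third block entries
  have hv30 : v.2.2 0 = (z3 0 : ℝ) + (n:ℝ)/2 := by rw [h3 0, hα10]; ring
  have hv31 : v.2.2 1 = (z3 1 : ℝ) - (n:ℝ)/2 := by rw [h3 1, hα11]; ring
  have hz31 : (z3 1 : ℝ) = -(z3 0 : ℝ) := by
    have : ((z3 0 + z3 1 : ℤ) : ℝ) = 0 := by exact_mod_cast hz3sum
    push_cast at this; linarith
  -- the inner product with r
  have hip : (2 * z3 0 + n : ℤ) = 1 := by
    have h := hipr
    simp only [ip, rvec, Prod.fst_zero, Prod.snd_zero, Pi.zero_apply, mul_zero,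
      Finset.sum_const_zero, zero_add, Pi.smul_apply, smul_eq_mul,
      Fin.sum_univ_two, hα10, hα11] at h
    have hR : (2 * (z3 0 : ℝ) + (n : ℝ)) = 1 := by
      rw [hv30, hv31, hz31] at h; linarith
    exact_mod_cast hR
  have hnodd : n % 2 = 1 := by omega
  have hnR : (n : ℝ) = 1 - 2 * (z3 0 : ℝ) := by
    have : ((2 * z3 0 + n : ℤ) : ℝ) = 1 := by exact_mod_cast hip
    push_cast at this; linarith
  have hv30' : v.2.2 0 = 1/2 := by rw [hv30, hnR]; ring
  have hv31' : v.2.2 1 = -(1/2) := by rw [hv31, hz31, hnR]; ring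
  have hS3 : ∑ i, (v.2.2 i)^2 = 1/2 := by
    rw [Fin.sum_univ_two, hv30', hv31']; norm_num
  -- m is odd
  have hm : m % 2 = 1 := by
    rcases Int.emod_two_eq m with h|h
    · exfalso
      apply hvΛ
      obtain ⟨m', hm'⟩ : ∃ m', m = 2*m' := ⟨m/2, by omega⟩
      have hm'R : (m:ℝ) = 2*(m':ℝ) := by exact_mod_cast hm'
      refine ⟨n + 2*m, ⟨?_, ?_⟩, ⟨?_, ?_⟩, ?_, ?_⟩ <;>
        simp only [αvec, Prod.fst_sub, Prod.snd_sub, Prod.smul_fst, Prod.smul_snd,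
          Pi.sub_apply, Pi.smul_apply, smul_eq_mul] <;>
        simp only [zsmul_eq_mul, smul_eq_mul]
      · intro i
        refine ⟨z1 i, ?_⟩
        have e := h1 i; push_cast at e ⊢; linarith
      · rw [Finset.sum_sub_distrib, ← Finset.mul_sum, sumα9, mul_zero, sub_zero, hv1sum]
      · intro i
        refine ⟨z2 i + (if (i:ℕ) = 9 then 9*m' else -m'), ?_⟩
        have e := h2 i
        by_cases hI : (i:ℕ) = 9
        · simp only [α9, hI, if_true] at e ⊢
          push_cast at e ⊢; linarith [hm'R]
        · simp only [α9, hI, if_false] at e ⊢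
          push_cast at e ⊢; linarith [hm'R]
      · rw [Finset.sum_sub_distrib]
        have e : ∑ i, ((n + 2*m : ℤ):ℝ) * (2 * α9 i) = ((n + 2*m : ℤ):ℝ) * 2 * (∑ i, α9 i) := by
          rw [Finset.mul_sum]; exact Finset.sum_congr rfl fun i _ => by ring
        rw [e, sumα9, mul_zero, sub_zero, hv2sum]
      · intro i
        refine ⟨z3 i + (if (i:ℕ) = 1 then m else -m), ?_⟩
        have e := h3 i
        by_cases hI : (i:ℕ) = 1
        · simp only [α1, hI, if_true] at e ⊢
          push_cast at e ⊢; linarith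
        · simp only [α1, hI, if_false] at e ⊢
          push_cast at e ⊢; linarith
      · rw [Finset.sum_sub_distrib, ← Finset.mul_sum, sumα1, mul_zero, sub_zero, hv3sum]
    · exact h
  -- norm bounds for the two A9 blocks
  have hB1 : (((n + 2*m) % 10 : ℤ) : ℝ) * (10 - (((n + 2*m) % 10 : ℤ) : ℝ)) / 10
      ≤ ∑ i, (v.1 i)^2 := by
    have hb := A9_bound z1 hz1sum (n + 2*m)
    have e : ∑ i, (v.1 i)^2 = ∑ i, ((z1 i : ℝ) + ((n + 2*m : ℤ):ℝ) * α9 i)^2 :=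
      Finset.sum_congr rfl fun i _ => by rw [h1 i]
    rw [e]; exact_mod_cast hb
  have hB2 : (((2*n - m) % 10 : ℤ) : ℝ) * (10 - (((2*n - m) % 10 : ℤ) : ℝ)) / 10
      ≤ ∑ i, (v.2.1 i)^2 := by
    have hb := A9_bound z2 hz2sum (2*n - m)
    have e : ∑ i, (v.2.1 i)^2 = ∑ i, ((z2 i : ℝ) + ((2*n - m : ℤ):ℝ) * α9 i)^2 :=
      Finset.sum_congr rfl fun i _ => by rw [h2 i]
    rw [e]; exact_mod_cast hb
  -- total norm
  have hnorm' : (∑ i, (v.1 i)^2) + (∑ i, (v.2.1 i)^2) + (∑ i, (v.2.2 i)^2) ≤ 3 := by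
    simpa only [ip, pow_two] using hnorm
  -- case analysis on residues
  have hk1 : (n+2*m) % 10 = 1 ∨ (n+2*m) % 10 = 3 ∨ (n+2*m) % 10 = 5 ∨
      (n+2*m) % 10 = 7 ∨ (n+2*m) % 10 = 9 := by omega
  rcases hk1 with e1|e1|e1|e1|e1
  · have e2 : (2*n-m) % 10 = 7 := by omega
    rw [e1] at hB1; rw [e2] at hB2; norm_num at hB1 hB2; linarith
  · have e2 : (2*n-m) % 10 = 1 := by omega
    rw [e1] at hB1; rw [e2] at hB2; norm_num at hB1 hB2; linarith
  · have e2 : (2*n-m) % 10 = 5 := by omega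
    rw [e1] at hB1; rw [e2] at hB2; norm_num at hB1 hB2; linarith
  · have e2 : (2*n-m) % 10 = 9 := by omega
    rw [e1] at hB1; rw [e2] at hB2; norm_num at hB1 hB2; linarith
  · have e2 : (2*n-m) % 10 = 3 := by omega
    rw [e1] at hB1; rw [e2] at hB2; norm_num at hB1 hB2; linarith


end
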